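/- Let A ∈ ℝ^{n×n} and 1 ≤ r < n. Let Ū ∈ St(r,n) satisfy (I_n − ŪŪᵀ)·A·Ū = 0 and let V̄ ∈ St(r,n) satisfy (I_n − V̄V̄ᵀ)·Aᵀ·V̄ = 0. Suppose there exist monic polynomials p, q ∈ ℂ[X] with deg p = r such that charpoly(A) = p·q over ℂ, every root of p has real part strictly greater than every root of q, and the characteristic polynomials over ℂ of both ŪᵀAŪ and V̄ᵀAᵀV̄ equal p (i.e., both equilibria correspond to the dominant r eigenvalues of A). Then the r×r matrix V̄ᵀŪ is invertible. -/

import Mathlib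

/-!
The column space of `Ub` is `A`-invariant and that of `Vb` is `Aᵀ`-invariant:
`A Ub = Ub P` and `Vbᵀ A = S Vbᵀ` with `P = Ubᵀ A Ub`, `S = Vbᵀ A Vb`, hence
`S (Vbᵀ Ub) = (Vbᵀ Ub) P`. Completing `Vb` to an orthogonal matrix `[Vb W]` puts `A` in block
triangular form, so `charpoly A = charpoly S * charpoly (Wᵀ A W)`; since `charpoly S` is the
characteristic polynomial `p` of `Sᵀ = Vbᵀ Aᵀ Vb`, the second factor is `q`.
If `Vbᵀ Ub` were singular, its kernel would be a nonzero `P`-invariant subspace, hence contain an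
eigenvector `x` of `P` for some root `μ` of `p`. Then `Ub x` is an eigenvector of `A` lying in
`ker Vbᵀ = range W`, so `μ` is also an eigenvalue of `Wᵀ A W`, i.e. a root of `q`, which the
spectral gap forbids.
-/

open Matrix Polynomial

theorem Module.End.exists_hasEigenvector_mem {K V : Type*} [Field K] [IsAlgClosed K]
    [AddCommGroup V] [Module K V] [FiniteDimensional K V] (f : Module.End K V)
    {N : Submodule K V} (hN : N ≠ ⊥) (hfN : ∀ x ∈ N, f x ∈ N) :
    ∃ μ x, x ∈ N ∧ f.HasEigenvector μ x := by
  have : Nontrivial N := Submodule.nontrivial_iff_ne_bot.mpr hN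
  obtain ⟨μ, hμ⟩ := Module.End.exists_eigenvalue (f.restrict hfN)
  obtain ⟨x, hx⟩ := hμ.exists_hasEigenvector
  refine ⟨μ, x, x.2, Module.End.mem_eigenspace_iff.mpr ?_, ?_⟩
  · simpa using congrArg Subtype.val hx.apply_eq_smul
  · simpa using hx.2

namespace Matrix

section CommRing

variable {R : Type*} [CommRing R] {n ι κ : Type*} [Fintype n] [Fintype ι] [Fintype κ]
  [DecidableEq n]

theorem mul_eq_mul_of_one_sub_mul_mul_mul_eq_zero {A : Matrix n n R} {U : Matrix n ι R}
    {U' : Matrix ι n R} (h : (1 - U * U') * A * U = 0) : A * U = U * (U' * A * U) := by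
  rwa [Matrix.sub_mul, Matrix.sub_mul, Matrix.one_mul, sub_eq_zero, Matrix.mul_assoc U,
    Matrix.mul_assoc U] at h

theorem charpoly_eq_mul_of_mul_add_mul_eq_one [DecidableEq ι] [DecidableEq κ]
    (A : Matrix n n R) {V : Matrix n ι R} {V' : Matrix ι n R} {W : Matrix n κ R}
    {W' : Matrix κ n R} (hcard : Fintype.card ι + Fintype.card κ = Fintype.card n)
    (hsplit : V * V' + W * W' = 1) (hVAW : V' * A * W = 0) :
    A.charpoly = (V' * A * V).charpoly * (W' * A * W).charpoly := by
  have hconj : (fromRows V' W' * A * fromCols V W).charpoly = A.charpoly := by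
    have h := charpoly_mul_comm' (fromRows V' W') (A * fromCols V W)
    rw [Matrix.mul_assoc A, fromCols_mul_fromRows, hsplit, Matrix.mul_one, Fintype.card_sum,
      hcard] at h
    rw [Matrix.mul_assoc]
    exact (isRegular_X_pow _).left.eq_iff.mp h
  rw [← hconj, fromRows_mul, fromRows_mul_fromCols, hVAW, charpoly_fromBlocks_zero₁₂]

variable [IsDomain R]

theorem isRoot_charpoly_of_mulVec_eq_smul [DecidableEq ι] (B : Matrix ι ι R) {μ : R}
    {x : ι → R} (hx : x ≠ 0) (h : B *ᵥ x = μ • x) : B.charpoly.IsRoot μ := by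
  rw [← charpoly_toLin', ← Module.End.hasEigenvalue_iff_isRoot_charpoly]
  exact Module.End.hasEigenvalue_of_hasEigenvector ⟨Module.End.mem_eigenspace_iff.mpr h, hx⟩

theorem isRoot_charpoly_of_mulVec_eq_smul_of_mulVec_eq_zero [DecidableEq κ] {A : Matrix n n R}
    {V : Matrix n ι R} {V' : Matrix ι n R} {W : Matrix n κ R} {W' : Matrix κ n R}
    (hsplit : V * V' + W * W' = 1) {μ : R} {u : n → R} (hu : u ≠ 0) (hAu : A *ᵥ u = μ • u)
    (hVu : V' *ᵥ u = 0) : (W' * A * W).charpoly.IsRoot μ := by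
  have huW : W *ᵥ (W' *ᵥ u) = u := by
    conv_rhs => rw [← one_mulVec u, ← hsplit]
    rw [add_mulVec, ← mulVec_mulVec, hVu, mulVec_zero, zero_add, mulVec_mulVec]
  refine isRoot_charpoly_of_mulVec_eq_smul _ (x := W' *ᵥ u) (fun h => hu ?_) ?_
  · rw [← huW, h, mulVec_zero]
  · rw [← mulVec_mulVec, ← mulVec_mulVec, huW, hAu, mulVec_smul]

end CommRing

section IsAlgClosed

variable {K n ι κ : Type*} [Field K] [IsAlgClosed K] [Fintype n] [Fintype ι] [Fintype κ]
  [DecidableEq n] [DecidableEq ι] [DecidableEq κ]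

theorem exists_mulVec_eq_smul_of_mul_eq_mul {M P S : Matrix ι ι K} (hSMP : S * M = M * P)
    (hM : M.det = 0) : ∃ (μ : K) (x : ι → K), x ≠ 0 ∧ M *ᵥ x = 0 ∧ P *ᵥ x = μ • x := by
  have hker : ∀ x ∈ LinearMap.ker M.mulVecLin, P.mulVecLin x ∈ LinearMap.ker M.mulVecLin := by
    intro x hx
    simp only [LinearMap.mem_ker, mulVecLin_apply] at hx ⊢
    rw [mulVec_mulVec, ← hSMP, ← mulVec_mulVec, hx, mulVec_zero]
  obtain ⟨x, hx0, hMx⟩ := exists_mulVec_eq_zero_iff.mpr hM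
  obtain ⟨μ, y, hyM, hy⟩ := Module.End.exists_hasEigenvector_mem P.mulVecLin
    ((Submodule.ne_bot_iff _).mpr ⟨x, hMx, hx0⟩) hker
  exact ⟨μ, y, hy.2, hyM, Module.End.mem_eigenspace_iff.mp hy.1⟩

theorem exists_isRoot_charpoly_of_det_eq_zero {A : Matrix n n K} {U V : Matrix n ι K}
    {U' V' : Matrix ι n K} {W : Matrix n κ K} {W' : Matrix κ n K} (hU : U' * U = 1)
    (hAU : A * U = U * (U' * A * U)) (hVA : V' * A = V' * A * V * V')
    (hsplit : V * V' + W * W' = 1) (hdet : (V' * U).det = 0) :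
    ∃ μ, (U' * A * U).charpoly.IsRoot μ ∧ (W' * A * W).charpoly.IsRoot μ := by
  have hSMP : V' * A * V * (V' * U) = V' * U * (U' * A * U) := by
    rw [← Matrix.mul_assoc, ← hVA, Matrix.mul_assoc, hAU, ← Matrix.mul_assoc]
  obtain ⟨μ, x, hx0, hMx, hPx⟩ := exists_mulVec_eq_smul_of_mul_eq_mul hSMP hdet
  have hUx : U *ᵥ x ≠ 0 := fun h => hx0 <| by
    rw [← one_mulVec x, ← hU, ← mulVec_mulVec, h, mulVec_zero]
  refine ⟨μ, isRoot_charpoly_of_mulVec_eq_smul _ hx0 hPx,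
    isRoot_charpoly_of_mulVec_eq_smul_of_mulVec_eq_zero hsplit hUx ?_ ?_⟩
  · rw [mulVec_mulVec, hAU, ← mulVec_mulVec, hPx, mulVec_smul]
  · rwa [mulVec_mulVec]

theorem exists_mem_roots_charpoly_map_of_det_eq_zero {F : Type*} [CommRing F] (φ : F →+* K)
    {A : Matrix n n F} {U V : Matrix n ι F} {U' V' : Matrix ι n F} {W : Matrix n κ F}
    {W' : Matrix κ n F} (hU : U' * U = 1) (hAU : A * U = U * (U' * A * U))
    (hVA : V' * A = V' * A * V * V') (hsplit : V * V' + W * W' = 1) (hdet : (V' * U).det = 0) :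
    ∃ μ, μ ∈ ((U' * A * U).map φ).charpoly.roots ∧ μ ∈ ((W' * A * W).map φ).charpoly.roots := by
  obtain ⟨μ, hμP, hμW⟩ := exists_isRoot_charpoly_of_det_eq_zero (A := A.map φ) (U := U.map φ)
    (U' := U'.map φ) (V := V.map φ) (V' := V'.map φ) (W := W.map φ) (W' := W'.map φ)
    (by simp [← Matrix.map_mul, hU])
    (by simp only [← Matrix.map_mul, hAU])
    (by simp only [← Matrix.map_mul, ← hVA])
    (by simp [← Matrix.map_mul, ← Matrix.map_add, hsplit])
    (by rw [← Matrix.map_mul, ← RingHom.mapMatrix_apply, ← RingHom.map_det, hdet, map_zero])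
  rw [← Matrix.map_mul, ← Matrix.map_mul] at hμP hμW
  exact ⟨μ, (mem_roots (charpoly_monic _).ne_zero).mpr hμP,
    (mem_roots (charpoly_monic _).ne_zero).mpr hμW⟩

end IsAlgClosed

section Real

variable {n ι κ : Type*} [Fintype n] [DecidableEq ι]

theorem orthonormal_toLp_transpose {V : Matrix n ι ℝ} (hV : Vᵀ * V = 1) :
    Orthonormal ℝ fun i => WithLp.toLp 2 (Vᵀ i) := by
  rw [orthonormal_iff_ite]
  intro i j
  rw [EuclideanSpace.inner_toLp_toLp, star_trivial, dotProduct_comm, ← one_apply, ← hV,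
    mul_apply']
  rfl

variable [Fintype ι] [Fintype κ] [DecidableEq n] [DecidableEq κ]

theorem exists_mul_transpose_add_mul_transpose_eq_one {V : Matrix n ι ℝ} (hV : Vᵀ * V = 1)
    (hcard : Fintype.card ι + Fintype.card κ = Fintype.card n) :
    ∃ W : Matrix n κ ℝ, V * Vᵀ + W * Wᵀ = 1 ∧ Vᵀ * W = 0 := by
  -- `Q` is the orthogonal matrix whose columns are an orthonormal basis extending those of `V`.
  let v : ι ⊕ κ → EuclideanSpace ℝ n := Sum.elim (fun i => WithLp.toLp 2 (Vᵀ i)) 0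
  have hv : Orthonormal ℝ ((Set.range Sum.inl).domRestrict v) := by
    convert (orthonormal_toLp_transpose hV).comp _
      (Equiv.ofInjective _ Sum.inl_injective).symm.injective
    ext ⟨_, i, rfl⟩ : 1
    simp [v]
  obtain ⟨b, hb⟩ := hv.exists_orthonormalBasis_extension_of_card_eq (by simp [hcard])
  set Q := (EuclideanSpace.basisFun n ℝ).toBasis.toMatrix b
  have hQ : fromCols V Q.toCols₂ = Q := by
    rw [← fromCols_toCols Q]
    congr 1
    ext a i
    simp only [toCols₁_apply, Q, Module.Basis.toMatrix_apply, hb _ ⟨i, rfl⟩]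
    rfl
  have hQQt : Q * Qᵀ = 1 := by
    simpa using (EuclideanSpace.basisFun n ℝ).toMatrix_orthonormalBasis_self_mul_conjTranspose b
  have hQtQ : Qᵀ * Q = 1 := by
    simpa using (EuclideanSpace.basisFun n ℝ).toMatrix_orthonormalBasis_conjTranspose_mul_self b
  refine ⟨Q.toCols₂, ?_, ?_⟩
  · rwa [← hQ, transpose_fromCols, fromCols_mul_fromRows] at hQQt
  · rw [← hQ, transpose_fromCols, fromRows_mul_fromCols, ← fromBlocks_one, fromBlocks_inj]
      at hQtQ
    exact hQtQ.2.1

end Real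

end Matrix

theorem left_right_equilibria_nondegenerate
    (n r : ℕ) (hrn : r < n)
    (A : Matrix (Fin n) (Fin n) ℝ)
    (Ub : Matrix (Fin n) (Fin r) ℝ) (hUbst : Ubᵀ * Ub = 1)
    (hUbeq : (1 - Ub * Ubᵀ) * A * Ub = 0)
    (Vb : Matrix (Fin n) (Fin r) ℝ) (hVbst : Vbᵀ * Vb = 1)
    (hVbeq : (1 - Vb * Vbᵀ) * Aᵀ * Vb = 0)
    (p q : Polynomial ℂ)
    (hfac : (A.map (Complex.ofReal ·)).charpoly = p * q)
    (hgap : ∀ μ ∈ p.roots, ∀ ν ∈ q.roots, ν.re < μ.re)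
    (hUp : ((Ubᵀ * A * Ub).map (Complex.ofReal ·)).charpoly = p)
    (hVp : ((Vbᵀ * Aᵀ * Vb).map (Complex.ofReal ·)).charpoly = p) :
    IsUnit (Vbᵀ * Ub) := by
  have hcard : Fintype.card (Fin r) + Fintype.card (Fin (n - r)) = Fintype.card (Fin n) := by
    simp only [Fintype.card_fin]
    omega
  obtain ⟨W, hsplit, hVW⟩ := exists_mul_transpose_add_mul_transpose_eq_one hVbst hcard
  have hAU := mul_eq_mul_of_one_sub_mul_mul_mul_eq_zero hUbeq
  have hVA : Vbᵀ * A = Vbᵀ * A * Vb * Vbᵀ := by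
    simpa [Matrix.mul_assoc] using
      congrArg transpose (mul_eq_mul_of_one_sub_mul_mul_mul_eq_zero hVbeq)
  have hchar := charpoly_eq_mul_of_mul_add_mul_eq_one A hcard hsplit
    (by rw [hVA, Matrix.mul_assoc, hVW, Matrix.mul_zero])
  have hVp' : ((Vbᵀ * A * Vb).map Complex.ofRealHom).charpoly = p := by
    rw [← hVp, ← charpoly_transpose, ← transpose_map]
    simp only [transpose_mul, transpose_transpose, Matrix.mul_assoc]
    rfl
  have hq : ((Wᵀ * A * W).map Complex.ofRealHom).charpoly = q := by
    refine mul_left_cancel₀ (hVp' ▸ (charpoly_monic _).ne_zero)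
      ((?_ : _ = (A.map Complex.ofRealHom).charpoly).trans hfac)
    rw [charpoly_map A, hchar, Polynomial.map_mul, ← charpoly_map, ← charpoly_map, hVp']
  rw [isUnit_iff_isUnit_det, isUnit_iff_ne_zero]
  intro hdet
  obtain ⟨μ, hμp, hμq⟩ :=
    exists_mem_roots_charpoly_map_of_det_eq_zero Complex.ofRealHom hUbst hAU hVA hsplit hdet
  exact (hgap μ (hUp ▸ hμp) μ (hq ▸ hμq)).false
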